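/- arXiv:2203.05838 — 11 statements merged into one kernel-verified Lean document; each statement's English description precedes it below -/
import Mathlib

section
/- Let λ ∈ (0,1). There exists a unique threshold equilibrium, i.e., a unique c* ∈ (0,T) satisfying c* = λ·R/(F(c*)·H + M) − (1−λ)·R/((1−F(c*))·H), if and only if λ > M/(H+M). -/
/-!
The equilibria are the fixed points of `G_λ = φ ∘ F` on `[0, T)`, where
`φ(p) = λR/(pH + M) - (1-λ)R/((1-p)H)` is strictly decreasing in the honest share `p ∈ [0, 1)`
and tends to `-∞` as `p → 1`.
Since `F` is strictly increasing, `G_λ` is strictly decreasing, so it has at most one fixed point,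
and a positive one forces `G_λ(0) > 0`. Conversely, if `G_λ(0) > 0`, then `G_λ` is negative at
costs where `F` is close to `1`, and the intermediate value theorem gives a fixed point. Finally
`G_λ(0) = λR/M - (1-λ)R/H`, which is positive exactly when `λ > M/(H+M)`.
-/

open Filter Topology Set Function

theorem StrictAntiOn.eq_of_isFixedPt {α : Type*} [LinearOrder α] {f : α → α} {s : Set α}
    (hf : StrictAntiOn f s) {x y : α} (hx : x ∈ s) (hy : y ∈ s) (hfx : IsFixedPt f x)
    (hfy : IsFixedPt f y) : x = y := by
  by_contra hne
  rcases Ne.lt_or_gt hne with hxy | hyx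
  · exact (hf hx hy hxy).not_gt (by rwa [hfx.eq, hfy.eq])
  · exact (hf hy hx hyx).not_gt (by rwa [hfx.eq, hfy.eq])

namespace Staking

/-- The paper's `G_λ(c)` is `indifference H M R lam (F c)`. -/
noncomputable def indifference (H M R lam p : ℝ) : ℝ :=
  lam * R / (p * H + M) - (1 - lam) * R / ((1 - p) * H)

section indifference

variable {H M R lam : ℝ} (hH : 0 < H) (hM : 0 < M)
include hH hM

theorem indifference_zero_pos_iff (hR : 0 < R) :
    0 < indifference H M R lam 0 ↔ M / (H + M) < lam := by
  rw [indifference, div_lt_iff₀ (by positivity), sub_pos, zero_mul, zero_add, sub_zero, one_mul,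
    div_lt_div_iff₀ hH hM]
  constructor <;> intro h <;> nlinarith

theorem strictAntiOn_indifference (hR : 0 < R) (hlam₀ : 0 < lam) (hlam₁ : lam ≤ 1) :
    StrictAntiOn (indifference H M R lam) (Ico 0 1) := by
  intro p ⟨hp₀, _⟩ q ⟨_, hq₁⟩ hpq
  have honest : lam * R / (q * H + M) < lam * R / (p * H + M) :=
    div_lt_div_of_pos_left (by positivity) (by positivity) (by nlinarith)
  have malicious : (1 - lam) * R / ((1 - p) * H) ≤ (1 - lam) * R / ((1 - q) * H) :=
    div_le_div_of_nonneg_left (by nlinarith) (by nlinarith) (by nlinarith)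
  unfold indifference
  linarith

theorem continuousOn_indifference : ContinuousOn (indifference H M R lam) (Ico 0 1) := by
  intro p ⟨hp₀, hp₁⟩
  have : (1 - p) * H ≠ 0 := by nlinarith
  unfold indifference
  fun_prop (disch := positivity)

theorem tendsto_indifference_atBot (hR : 0 < R) (hlam₁ : lam < 1) :
    Tendsto (indifference H M R lam) (𝓝[<] 1) atBot := by
  have hshare : Tendsto (fun p : ℝ ↦ (1 - p) * H) (𝓝[<] 1) (𝓝[>] 0) := by
    refine tendsto_nhdsWithin_of_tendsto_nhds_of_eventually_within _ ?_ ?_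
    · exact (((continuous_const.sub continuous_id).mul continuous_const).tendsto'
        (f := fun p : ℝ ↦ (1 - p) * H) 1 0 (by simp)).mono_left nhdsWithin_le_nhds
    · filter_upwards [self_mem_nhdsWithin] with p (hp : p < 1)
      exact mul_pos (sub_pos.2 hp) hH
  have hmalicious := hshare.inv_tendsto_nhdsGT_zero.const_mul_atTop
    (mul_pos (sub_pos.2 hlam₁) hR)
  have hhonest : Tendsto (fun p : ℝ ↦ lam * R / (p * H + M)) (𝓝[<] 1) (𝓝 (lam * R / (H + M))) := by
    have : ContinuousAt (fun p : ℝ ↦ lam * R / (p * H + M)) 1 := by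
      fun_prop (disch := positivity)
    simpa using this.tendsto.mono_left nhdsWithin_le_nhds
  refine (hhonest.add_atBot (tendsto_neg_atTop_atBot.comp hmalicious)).congr fun p ↦ ?_
  simp only [indifference, comp_apply, Pi.inv_apply]
  ring

end indifference

def costRange (T : EReal) : Set ℝ := {c | 0 ≤ c ∧ (c : EReal) < T}

variable {T : EReal}

theorem zero_mem_costRange {c : ℝ} (hc : c ∈ costRange T) : 0 ∈ costRange T :=
  ⟨le_rfl, lt_of_le_of_lt (EReal.coe_nonneg.2 hc.1) hc.2⟩

theorem Icc_zero_subset_costRange {c : ℝ} (hc : c ∈ costRange T) : Icc 0 c ⊆ costRange T :=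
  fun _ hx ↦ ⟨hx.1, lt_of_le_of_lt (EReal.coe_le_coe_iff.2 hx.2) hc.2⟩

theorem mapsTo_costRange_Ico {F : ℝ → ℝ} (hF0 : F 0 = 0) (hF : StrictMonoOn F (costRange T))
    (hF1 : ∀ c ∈ costRange T, F c < 1) : MapsTo F (costRange T) (Ico 0 1) :=
  fun c hc ↦ ⟨hF0 ▸ hF.monotoneOn (zero_mem_costRange hc) hc hc.1, hF1 c hc⟩

end Staking

open Staking

theorem staking_threshold_equilibrium_existence_unique_general
    (H M R lam : ℝ) (T : EReal) (F : ℝ → ℝ)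
    (hH : 0 < H) (hM : 0 < M) (hR : 0 < R)
    (hF0 : F 0 = 0)
    (hFmono : ∀ c₁ c₂ : ℝ, 0 ≤ c₁ → c₁ < c₂ → (c₂ : EReal) < T → F c₁ < F c₂)
    (hFcont : ContinuousOn F {c : ℝ | 0 ≤ c ∧ (c : EReal) < T})
    (hFlt1 : ∀ c : ℝ, 0 ≤ c → (c : EReal) < T → F c < 1)
    (hFlim : ∀ y : ℝ, y < 1 → ∃ c : ℝ, 0 ≤ c ∧ (c : EReal) < T ∧ y < F c)
    (hlam : 0 < lam ∧ lam < 1) :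
    (∃! c : ℝ, (0 < c ∧ (c : EReal) < T) ∧
        c = lam * R / (F c * H + M) - (1 - lam) * R / ((1 - F c) * H))
      ↔ M / (H + M) < lam := by
  obtain ⟨hlam₀, hlam₁⟩ := hlam
  have hFS : StrictMonoOn F (costRange T) := fun a ha b hb hab ↦ hFmono a b ha.1 hab hb.2
  have hmaps := mapsTo_costRange_Ico hF0 hFS fun c hc ↦ hFlt1 c hc.1 hc.2
  set G := indifference H M R lam ∘ F
  have hG : StrictAntiOn G (costRange T) :=
    (strictAntiOn_indifference hH hM hR hlam₀ hlam₁.le).comp_strictMonoOn hFS hmaps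
  have hG0 : G 0 = indifference H M R lam 0 := congrArg (indifference H M R lam) hF0
  rw [← indifference_zero_pos_iff hH hM hR, ← hG0]
  constructor
  · rintro ⟨c, ⟨⟨hc₀, hcT⟩, hc⟩, -⟩
    have hcS : c ∈ costRange T := ⟨hc₀.le, hcT⟩
    exact hc₀.trans (hc.trans_lt (hG (zero_mem_costRange hcS) hcS hc₀))
  · intro hpos
    obtain ⟨a, ha, hneg⟩ := mem_nhdsLT_iff_exists_Ioo_subset.1
      ((tendsto_indifference_atBot hH hM hR hlam₁).eventually_lt_atBot 0)
    obtain ⟨b, hb₀, hbT, hab⟩ := hFlim a ha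
    have hGb : G b < b := (hneg ⟨hab, hFlt1 b hb₀ hbT⟩).trans_le hb₀
    have hGcont : ContinuousOn G (Icc 0 b) :=
      ((continuousOn_indifference hH hM).comp hFcont hmaps).mono
        (Icc_zero_subset_costRange ⟨hb₀, hbT⟩)
    obtain ⟨c, hc, hfix⟩ := exists_mem_Icc_isFixedPt hGcont hb₀ hpos.le hGb.le
    have hcS := Icc_zero_subset_costRange ⟨hb₀, hbT⟩ hc
    have hc₀ : c ≠ 0 := by rintro rfl; exact hpos.ne' hfix
    exact ⟨c, ⟨⟨hc.1.lt_of_ne' hc₀, hcS.2⟩, hfix.symm⟩,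
      fun d ⟨⟨hd₀, hdT⟩, hd⟩ ↦ hG.eq_of_isFixedPt ⟨hd₀.le, hdT⟩ hcS hd.symm hfix⟩

/-- Let `λ ∈ (0,1)`. There exists a unique threshold equilibrium,
i.e., a unique `c* ∈ (0,T)` satisfying
`c* = λ·R/(F(c*)·H + M) − (1−λ)·R/((1−F(c*))·H)`, if and only if `λ > M/(H+M)`. -/
theorem staking_threshold_equilibrium_existence_unique
    (H M R lam : ℝ) (T : EReal) (F : ℝ → ℝ)
    (hH : 0 < H) (hM : 0 < M) (hMH : M < H) (hR : 0 < R)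
    (hT : 0 < T)
    (hF0 : F 0 = 0)
    (hFmono : ∀ c₁ c₂ : ℝ, 0 ≤ c₁ → c₁ < c₂ → (c₂ : EReal) < T → F c₁ < F c₂)
    (hFcont : ContinuousOn F {c : ℝ | 0 ≤ c ∧ (c : EReal) < T})
    (hFlt1 : ∀ c : ℝ, 0 ≤ c → (c : EReal) < T → F c < 1)
    (hFlim : ∀ y : ℝ, y < 1 → ∃ c : ℝ, 0 ≤ c ∧ (c : EReal) < T ∧ y < F c)
    (hlam : 0 < lam ∧ lam < 1) :
    (∃! c : ℝ, (0 < c ∧ (c : EReal) < T) ∧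
        c = lam * R / (F c * H + M) - (1 - lam) * R / ((1 - F c) * H))
      ↔ M / (H + M) < lam :=
  staking_threshold_equilibrium_existence_unique_general H M R lam T F hH hM hR hF0 hFmono hFcont
    hFlt1 hFlim hlam
end

section
/- If M/(H+M) < λ₁ < λ₂ < 1 and c₁*, c₂* ∈ (0,T) are the respective threshold equilibria (c_i* = G_{λ_i}(c_i*)), then c₁* < c₂*. In other words, the equilibrium cost threshold c*(λ) is strictly increasing in the reward share λ kept by pool owners. -/
/-!
For fixed `c`, `G_λ(c)` is affine in `λ` with positive slope; for fixed `λ ∈ [0,1]`, `G_λ` is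
antitone in `c`, since `F` is increasing and both denominators move the wrong way. So if
`c₂ ≤ c₁` then `c₁ = G_{λ₁}(c₁) < G_{λ₂}(c₁) ≤ G_{λ₂}(c₂) = c₂`, a contradiction.
-/

/-- `G_λ(c)` as a function of `f = F c`. -/
noncomputable def indifference (H M R lam f : ℝ) : ℝ :=
  lam * R / (f * H + M) - (1 - lam) * R / ((1 - f) * H)

section Indifference

variable {H M R : ℝ}

theorem indifference_strictMono_lam {f : ℝ} (hR : 0 < R) (hpool : 0 < f * H + M)
    (hsolo : 0 < (1 - f) * H) : StrictMono fun lam => indifference H M R lam f := by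
  intro lam₁ lam₂ hlam
  simp only [indifference]
  gcongr

theorem indifference_antitoneOn {lam : ℝ} (hH : 0 < H) (hM : 0 < M) (hR : 0 ≤ R)
    (hlam0 : 0 ≤ lam) (hlam1 : lam ≤ 1) : AntitoneOn (indifference H M R lam) (Set.Ico 0 1) := by
  rintro f₁ ⟨hf₁0, -⟩ f₂ ⟨-, hf₂1⟩ hf
  have hsolo : 0 < (1 - f₂) * H := mul_pos (by linarith) hH
  simp only [indifference]
  gcongr

end Indifference

theorem threshold_equilibrium_strict_mono_in_lambda_general
    (H M R : ℝ) (T : EReal) (F : ℝ → ℝ)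
    (hH : 0 < H) (hM : 0 < M) (hR : 0 < R)
    (hF0 : F 0 = 0)
    (hFmono : ∀ c₁ c₂ : ℝ, 0 ≤ c₁ → c₁ < c₂ → (c₂ : EReal) < T → F c₁ < F c₂)
    (hFlt1 : ∀ c : ℝ, 0 ≤ c → (c : EReal) < T → F c < 1)
    (lam₁ lam₂ c₁ c₂ : ℝ)
    (hlam₁ : M / (H + M) < lam₁) (hlam₁₂ : lam₁ < lam₂) (hlam₂ : lam₂ < 1)
    (hc₁ : 0 < c₁ ∧ (c₁ : EReal) < T)
    (heq₁ : c₁ = lam₁ * R / (F c₁ * H + M) - (1 - lam₁) * R / ((1 - F c₁) * H))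
    (hc₂ : 0 < c₂ ∧ (c₂ : EReal) < T)
    (heq₂ : c₂ = lam₂ * R / (F c₂ * H + M) - (1 - lam₂) * R / ((1 - F c₂) * H)) :
    c₁ < c₂ := by
  have hF_mem : ∀ c : ℝ, 0 < c → (c : EReal) < T → F c ∈ Set.Ico 0 1 := fun c hc hcT =>
    ⟨hF0 ▸ (hFmono 0 c le_rfl hc hcT).le, hFlt1 c hc.le hcT⟩
  obtain ⟨hf₁0, hf₁1⟩ := hF_mem c₁ hc₁.1 hc₁.2
  have hlam₂0 : 0 ≤ lam₂ := by linarith [div_pos hM (add_pos hH hM)]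
  by_contra! h
  have hF : F c₂ ≤ F c₁ := h.eq_or_lt.elim (fun h => h ▸ le_rfl)
    fun h => (hFmono c₂ c₁ hc₂.1.le h hc₁.2).le
  refine h.not_gt ?_
  calc
    c₁ = indifference H M R lam₁ (F c₁) := heq₁
    _ < indifference H M R lam₂ (F c₁) :=
      indifference_strictMono_lam hR (by positivity) (mul_pos (by linarith) hH) hlam₁₂
    _ ≤ indifference H M R lam₂ (F c₂) :=
      indifference_antitoneOn hH hM hR.le hlam₂0 hlam₂.le (hF_mem c₂ hc₂.1 hc₂.2) ⟨hf₁0, hf₁1⟩ hF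
    _ = c₂ := heq₂.symm

/-- If `M/(H+M) < λ₁ < λ₂ < 1` and `c₁*, c₂* ∈ (0,T)` are the respective
threshold equilibria, then `c₁* < c₂*`: the equilibrium cost threshold is strictly
increasing in the reward share `λ` kept by pool owners. -/
theorem threshold_equilibrium_strict_mono_in_lambda
    (H M R : ℝ) (T : EReal) (F : ℝ → ℝ)
    (hH : 0 < H) (hM : 0 < M) (hMH : M < H) (hR : 0 < R)
    (hT : 0 < T)
    (hF0 : F 0 = 0)
    (hFmono : ∀ c₁ c₂ : ℝ, 0 ≤ c₁ → c₁ < c₂ → (c₂ : EReal) < T → F c₁ < F c₂)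
    (hFcont : ContinuousOn F {c : ℝ | 0 ≤ c ∧ (c : EReal) < T})
    (hFlt1 : ∀ c : ℝ, 0 ≤ c → (c : EReal) < T → F c < 1)
    (hFlim : ∀ y : ℝ, y < 1 → ∃ c : ℝ, 0 ≤ c ∧ (c : EReal) < T ∧ y < F c)
    (lam₁ lam₂ c₁ c₂ : ℝ)
    (hlam₁ : M / (H + M) < lam₁) (hlam₁₂ : lam₁ < lam₂) (hlam₂ : lam₂ < 1)
    (hc₁ : 0 < c₁ ∧ (c₁ : EReal) < T)
    (heq₁ : c₁ = lam₁ * R / (F c₁ * H + M) - (1 - lam₁) * R / ((1 - F c₁) * H))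
    (hc₂ : 0 < c₂ ∧ (c₂ : EReal) < T)
    (heq₂ : c₂ = lam₂ * R / (F c₂ * H + M) - (1 - lam₂) * R / ((1 - F c₂) * H)) :
    c₁ < c₂ :=
  threshold_equilibrium_strict_mono_in_lambda_general H M R T F hH hM hR hF0 hFmono hFlt1 lam₁ lam₂
    c₁ c₂ hlam₁ hlam₁₂ hlam₂ hc₁ heq₁ hc₂ heq₂
end

section
/- If λ = M/(H+M), then the only c ∈ [0,T) satisfying c = λ·R/(F(c)·H + M) − (1−λ)·R/((1−F(c))·H) is c = 0; hence all honest agents delegate and malicious agents control all stakes. -/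
/-!
At `λ = M/(H+M)` the right-hand side of the indifference equation equals
`R/(H+M) · (M/(fH+M) − 1/(1−f))` with `f = F(c)`. The first fraction is at most `1` and the
second exceeds `1` as soon as `0 < f < 1`, so the right-hand side is negative at every `c > 0`
(where `0 < F c < 1`) and vanishes at `c = 0`.
-/

/-- Right-hand side of the indifference equation, as a function of `f = F(c)`. -/
noncomputable def indifferenceRHS (H M R lam f : ℝ) : ℝ :=
  lam * R / (f * H + M) - (1 - lam) * R / ((1 - f) * H)

lemma indifferenceRHS_eq {H M : ℝ} (hH : H ≠ 0) (hHM : H + M ≠ 0) (R f : ℝ) :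
    indifferenceRHS H M R (M / (H + M)) f = R / (H + M) * (M / (f * H + M) - 1 / (1 - f)) := by
  have hlam : 1 - M / (H + M) = H / (H + M) := by field_simp; ring
  rw [indifferenceRHS, hlam]
  field_simp

lemma indifferenceRHS_zero {H M : ℝ} (hH : 0 < H) (hM : 0 < M) (R : ℝ) :
    indifferenceRHS H M R (M / (H + M)) 0 = 0 := by
  rw [indifferenceRHS_eq hH.ne' (by positivity)]
  simp [hM.ne']

lemma indifferenceRHS_neg {H M R f : ℝ} (hH : 0 < H) (hM : 0 ≤ M) (hR : 0 < R)
    (hf0 : 0 < f) (hf1 : f < 1) :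
    indifferenceRHS H M R (M / (H + M)) f < 0 := by
  have hHM : 0 < H + M := by positivity
  rw [indifferenceRHS_eq hH.ne' hHM.ne']
  have hfirst : M / (f * H + M) ≤ 1 :=
    div_le_one_of_le₀ (by nlinarith) (by positivity)
  have hsecond : 1 < 1 / (1 - f) := by
    rw [lt_div_iff₀ (by linarith)]
    linarith
  exact mul_neg_of_pos_of_neg (by positivity) (by linarith)

theorem threshold_equilibrium_boundary_lambda_general
    (H M R : ℝ) (T : EReal) (F : ℝ → ℝ)
    (hH : 0 < H) (hM : 0 < M) (hR : 0 < R)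
    (hF0 : F 0 = 0)
    (hFmono : ∀ c₁ c₂ : ℝ, 0 ≤ c₁ → c₁ < c₂ → (c₂ : EReal) < T → F c₁ < F c₂)
    (hFlt1 : ∀ c : ℝ, 0 ≤ c → (c : EReal) < T → F c < 1)
    :
    ∀ c : ℝ, 0 ≤ c → (c : EReal) < T →
      (c = (M / (H + M)) * R / (F c * H + M)
            - (1 - M / (H + M)) * R / ((1 - F c) * H)
        ↔ c = 0) := by
  intro c hc hcT
  change c = indifferenceRHS H M R (M / (H + M)) (F c) ↔ c = 0
  constructor
  · intro hEq
    by_contra hne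
    have hcpos : 0 < c := lt_of_le_of_ne hc (Ne.symm hne)
    have hFpos : 0 < F c := hF0 ▸ hFmono 0 c le_rfl hcpos hcT
    have hneg := indifferenceRHS_neg hH hM.le hR hFpos (hFlt1 c hc hcT)
    linarith
  · rintro rfl
    rw [hF0, indifferenceRHS_zero hH hM]

/-- If `λ = M/(H+M)`, then the only `c ∈ [0,T)` satisfying the
indifference equation `c = λ·R/(F(c)·H + M) − (1−λ)·R/((1−F(c))·H)` is `c = 0`;
hence all honest agents delegate and malicious agents control all stakes. -/
theorem threshold_equilibrium_boundary_lambda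
    (H M R : ℝ) (T : EReal) (F : ℝ → ℝ)
    (hH : 0 < H) (hM : 0 < M) (hMH : M < H) (hR : 0 < R)
    (hT : 0 < T)
    (hF0 : F 0 = 0)
    (hFmono : ∀ c₁ c₂ : ℝ, 0 ≤ c₁ → c₁ < c₂ → (c₂ : EReal) < T → F c₁ < F c₂)
    (hFcont : ContinuousOn F {c : ℝ | 0 ≤ c ∧ (c : EReal) < T})
    (hFlt1 : ∀ c : ℝ, 0 ≤ c → (c : EReal) < T → F c < 1)
    (hFlim : ∀ y : ℝ, y < 1 → ∃ c : ℝ, 0 ≤ c ∧ (c : EReal) < T ∧ y < F c)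
    :
    ∀ c : ℝ, 0 ≤ c → (c : EReal) < T →
      (c = (M / (H + M)) * R / (F c * H + M)
            - (1 - M / (H + M)) * R / ((1 - F c) * H)
        ↔ c = 0) :=
  threshold_equilibrium_boundary_lambda_general H M R T F hH hM hR hF0 hFmono hFlt1
end

section
/- If 0 ≤ λ < M/(H+M), then there exists no c ∈ [0,T) satisfying c = λ·R/(F(c)·H + M) − (1−λ)·R/((1−F(c))·H); in particular no equilibrium exists in which a positive measure of honest agents run pools. -/
/-! For `c ≥ 0` the bounds `0 ≤ F c < 1` and `λ (H + M) < M` give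
`λ (1 - F c) H ≤ λ H < (1 - λ) M ≤ (1 - λ) (F c H + M)`, so the right-hand side of the
indifference equation is negative and cannot equal `c`. -/

/-- Right-hand side of the indifference equation, as a function of the pool share `p = F c`. -/
noncomputable def indifferenceGap (H M R lam p : ℝ) : ℝ :=
  lam * R / (p * H + M) - (1 - lam) * R / ((1 - p) * H)

lemma mul_lt_one_sub_mul_of_lt_div {H M lam : ℝ} (hHM : 0 < H + M) (hlam : lam < M / (H + M)) :
    lam * H < (1 - lam) * M := by
  have := (lt_div_iff₀ hHM).mp hlam
  linarith

lemma indifferenceGap_neg {H M R lam p : ℝ} (hH : 0 < H) (hM : 0 < M) (hR : 0 < R)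
    (hlam0 : 0 ≤ lam) (hlam : lam * H < (1 - lam) * M) (hp0 : 0 ≤ p) (hp1 : p < 1) :
    indifferenceGap H M R lam p < 0 := by
  have hlam1 : lam < 1 := by nlinarith
  have hd1 : 0 < p * H + M := by positivity
  have hd2 : 0 < (1 - p) * H := mul_pos (sub_pos.mpr hp1) hH
  have hcross : lam * ((1 - p) * H) < (1 - lam) * (p * H + M) := by
    calc lam * ((1 - p) * H) ≤ lam * H := by
          nlinarith [mul_nonneg hlam0 (mul_nonneg hp0 hH.le)]
      _ < (1 - lam) * M := hlam
      _ ≤ (1 - lam) * (p * H + M) := by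
          nlinarith [mul_nonneg (sub_nonneg.mpr hlam1.le) (mul_nonneg hp0 hH.le)]
  rw [indifferenceGap, sub_neg, div_lt_div_iff₀ hd1 hd2]
  nlinarith [mul_lt_mul_of_pos_right hcross hR]

lemma nonneg_of_map_zero_of_strictMonoOn {F : ℝ → ℝ} {T : EReal} (hF0 : F 0 = 0)
    (hFmono : ∀ c₁ c₂ : ℝ, 0 ≤ c₁ → c₁ < c₂ → (c₂ : EReal) < T → F c₁ < F c₂)
    {c : ℝ} (hc0 : 0 ≤ c) (hcT : (c : EReal) < T) : 0 ≤ F c := by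
  rcases hc0.eq_or_lt with rfl | hc
  · exact hF0.ge
  · exact hF0 ▸ (hFmono 0 c le_rfl hc hcT).le

theorem no_threshold_equilibrium_low_lambda_general
    (H M R lam : ℝ) (T : EReal) (F : ℝ → ℝ)
    (hH : 0 < H) (hM : 0 < M) (hR : 0 < R)
    (hF0 : F 0 = 0)
    (hFmono : ∀ c₁ c₂ : ℝ, 0 ≤ c₁ → c₁ < c₂ → (c₂ : EReal) < T → F c₁ < F c₂)
    (hFlt1 : ∀ c : ℝ, 0 ≤ c → (c : EReal) < T → F c < 1)
    (hlam : 0 ≤ lam ∧ lam < M / (H + M)) :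
    ¬ ∃ c : ℝ, 0 ≤ c ∧ (c : EReal) < T ∧
        c = lam * R / (F c * H + M) - (1 - lam) * R / ((1 - F c) * H) := by
  rintro ⟨c, hc0, hcT, heq⟩
  have hgap : indifferenceGap H M R lam (F c) < 0 :=
    indifferenceGap_neg hH hM hR hlam.1
      (mul_lt_one_sub_mul_of_lt_div (by positivity) hlam.2)
      (nonneg_of_map_zero_of_strictMonoOn hF0 hFmono hc0 hcT) (hFlt1 c hc0 hcT)
  rw [indifferenceGap, ← heq] at hgap
  linarith

/-- If `0 ≤ λ < M/(H+M)`, then there exists no `c ∈ [0,T)` satisfying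
the indifference equation `c = λ·R/(F(c)·H + M) − (1−λ)·R/((1−F(c))·H)`; in particular
no equilibrium exists in which a positive measure of honest agents run pools. -/
theorem no_threshold_equilibrium_low_lambda
    (H M R lam : ℝ) (T : EReal) (F : ℝ → ℝ)
    (hH : 0 < H) (hM : 0 < M) (hMH : M < H) (hR : 0 < R)
    (hT : 0 < T)
    (hF0 : F 0 = 0)
    (hFmono : ∀ c₁ c₂ : ℝ, 0 ≤ c₁ → c₁ < c₂ → (c₂ : EReal) < T → F c₁ < F c₂)
    (hFcont : ContinuousOn F {c : ℝ | 0 ≤ c ∧ (c : EReal) < T})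
    (hFlt1 : ∀ c : ℝ, 0 ≤ c → (c : EReal) < T → F c < 1)
    (hFlim : ∀ y : ℝ, y < 1 → ∃ c : ℝ, 0 ≤ c ∧ (c : EReal) < T ∧ y < F c)
    (hlam : 0 ≤ lam ∧ lam < M / (H + M)) :
    ¬ ∃ c : ℝ, 0 ≤ c ∧ (c : EReal) < T ∧
        c = lam * R / (F c * H + M) - (1 - lam) * R / ((1 - F c) * H) :=
  no_threshold_equilibrium_low_lambda_general H M R lam T F hH hM hR hF0 hFmono hFlt1 hlam
end

section
/- If T > R/(H+M) (which holds automatically when T = ∞), then there exists a unique c₁ ∈ (0,T) satisfying c₁ = R/(F(c₁)·H + M); this is the threshold equilibrium of the staking pool formation game for λ = 1. -/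
/-! Write `D c = F c * H + M`. For `c > 0` the fixed-point equation `c = R / D c` says
`c * D c = R`. Since `D` is continuous and strictly increasing, `c ↦ c * D c` is continuous,
vanishes at `0` and is strictly increasing where `D > 0`, so the equation has at most one positive
root; and because `D c → H + M` as `c → T`, the product exceeds `R` somewhere below `T` as soon
as `R / (H + M) < T`, so the intermediate value theorem yields the root. -/

open Set

theorem eq_div_iff_mul_eq_of_ne_zero {α : Type*} [GroupWithZero α] {a b c : α}
    (ha : a ≠ 0) (hb : b ≠ 0) : a = b / c ↔ a * c = b := by
  rcases eq_or_ne c 0 with rfl | hc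
  · simp [ha, hb.symm]
  · exact eq_div_iff_mul_eq hc

theorem StrictMonoOn.id_mul_of_pos {α : Type*} [Semiring α] [PartialOrder α]
    [IsStrictOrderedRing α] {S : Set α} {D : α → α} (hD : StrictMonoOn D S) :
    StrictMonoOn (fun c => c * D c) {c | c ∈ S ∧ 0 < c ∧ 0 < D c} := by
  rintro a ⟨haS, ha, hDa⟩ b ⟨hbS, -, -⟩ hab
  exact mul_lt_mul'' hab (hD haS hbS hab) ha.le hDa.le

theorem existsUnique_mul_eq_of_strictMonoOn {S : Set ℝ} {D : ℝ → ℝ} {b R : ℝ}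
    (hD : StrictMonoOn D S) (hb : 0 ≤ b) (hbS : Icc 0 b ⊆ S) (hDc : ContinuousOn D (Icc 0 b))
    (hR : 0 < R) (hRb : R < b * D b) :
    ∃! c, c ∈ S ∧ 0 < c ∧ c * D c = R := by
  obtain ⟨c, hc, hcR⟩ : ∃ c ∈ Ioo 0 b, c * D c = R :=
    intermediate_value_Ioo hb (continuousOn_id.mul hDc) (by simpa using ⟨hR, hRb⟩)
  refine ⟨c, ⟨hbS (Ioo_subset_Icc_self hc), hc.1, hcR⟩, ?_⟩
  have hmem : ∀ {x}, x ∈ S → 0 < x → x * D x = R → x ∈ {c | c ∈ S ∧ 0 < c ∧ 0 < D c} :=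
    fun hxS hx hxR => ⟨hxS, hx, pos_of_mul_pos_right (hxR ▸ hR) hx.le⟩
  rintro x ⟨hxS, hx, hxR⟩
  exact hD.id_mul_of_pos.injOn (hmem hxS hx hxR)
    (hmem (hbS (Ioo_subset_Icc_self hc)) hc.1 hcR) (hxR.trans hcR.symm)

theorem exists_lt_mul_of_monotoneOn {T : EReal} {D : ℝ → ℝ} {L R : ℝ}
    (hD : MonotoneOn D {c | 0 ≤ c ∧ (c : EReal) < T}) (hL : 0 < L) (hR : 0 < R)
    (hDlim : ∀ y < L, ∃ c : ℝ, 0 ≤ c ∧ (c : EReal) < T ∧ y < D c)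
    (hT : ((R / L : ℝ) : EReal) < T) :
    ∃ b : ℝ, 0 < b ∧ (b : EReal) < T ∧ R < b * D b := by
  obtain ⟨d, hRLd, hdT⟩ := EReal.lt_iff_exists_real_btwn.1 hT
  have hRLd : R / L < d := by exact_mod_cast hRLd
  have hd : 0 < d := (div_pos hR hL).trans hRLd
  obtain ⟨e, he, heT, hDe⟩ := hDlim (R / d) <| by
    rw [div_lt_iff₀ hd, mul_comm]; rwa [div_lt_iff₀ hL] at hRLd
  have hmaxT : ((max e d : ℝ) : EReal) < T := by
    rw [EReal.coe_strictMono.monotone.map_max]; exact max_lt heT hdT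
  have hDmax : R / d < D (max e d) :=
    hDe.trans_le (hD ⟨he, heT⟩ ⟨he.trans (le_max_left e d), hmaxT⟩ (le_max_left e d))
  refine ⟨max e d, hd.trans_le (le_max_right e d), hmaxT, ?_⟩
  calc R = d * (R / d) := (mul_div_cancel₀ R hd.ne').symm
    _ < d * D (max e d) := mul_lt_mul_of_pos_left hDmax hd
    _ ≤ max e d * D (max e d) :=
      mul_le_mul_of_nonneg_right (le_max_right e d) ((div_pos hR hd).trans hDmax).le

theorem lambda_one_equilibrium_exists_unique_general
    (H M R : ℝ) (T : EReal) (F : ℝ → ℝ)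
    (hH : 0 < H) (hM : 0 < M) (hR : 0 < R)
    (hFmono : ∀ c₁ c₂ : ℝ, 0 ≤ c₁ → c₁ < c₂ → (c₂ : EReal) < T → F c₁ < F c₂)
    (hFcont : ContinuousOn F {c : ℝ | 0 ≤ c ∧ (c : EReal) < T})
    (hFlim : ∀ y : ℝ, y < 1 → ∃ c : ℝ, 0 ≤ c ∧ (c : EReal) < T ∧ y < F c)
    (hT' : ((R / (H + M) : ℝ) : EReal) < T) :
    ∃! c : ℝ, (0 < c ∧ (c : EReal) < T) ∧ c = R / (F c * H + M) := by
  set S := {c : ℝ | 0 ≤ c ∧ (c : EReal) < T}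
  have hD : StrictMonoOn (fun c => F c * H + M) S := fun a ha b hb hab => by
    simpa using mul_lt_mul_of_pos_right (hFmono a b ha.1 hab hb.2) hH
  have hDlim : ∀ y < H + M, ∃ c : ℝ, 0 ≤ c ∧ (c : EReal) < T ∧ y < F c * H + M := fun y hy => by
    obtain ⟨c, hc, hcT, hFc⟩ := hFlim ((y - M) / H) (by rw [div_lt_one hH]; linarith)
    exact ⟨c, hc, hcT, by rw [div_lt_iff₀ hH] at hFc; linarith⟩
  obtain ⟨b, hb, hbT, hRb⟩ := exists_lt_mul_of_monotoneOn hD.monotoneOn (by linarith) hR hDlim hT'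
  have hbS : Icc 0 b ⊆ S := fun c hc => ⟨hc.1, (EReal.coe_le_coe_iff.2 hc.2).trans_lt hbT⟩
  have hDc : ContinuousOn (fun c => F c * H + M) (Icc 0 b) :=
    ((hFcont.mono hbS).mul continuousOn_const).add continuousOn_const
  refine (existsUnique_congr fun c => ?_).2
    (existsUnique_mul_eq_of_strictMonoOn hD hb.le hbS hDc hR hRb)
  constructor
  · rintro ⟨⟨hc, hcT⟩, hcR⟩
    exact ⟨⟨hc.le, hcT⟩, hc, (eq_div_iff_mul_eq_of_ne_zero hc.ne' hR.ne').1 hcR⟩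
  · rintro ⟨⟨-, hcT⟩, hc, hcR⟩
    exact ⟨⟨hc, hcT⟩, (eq_div_iff_mul_eq_of_ne_zero hc.ne' hR.ne').2 hcR⟩

/-- If `T > R/(H+M)` (automatic when `T = ∞`), then there exists a
unique `c₁ ∈ (0,T)` satisfying `c₁ = R/(F(c₁)·H + M)`; this is the threshold
equilibrium of the staking pool formation game for `λ = 1`. -/
theorem lambda_one_equilibrium_exists_unique
    (H M R : ℝ) (T : EReal) (F : ℝ → ℝ)
    (hH : 0 < H) (hM : 0 < M) (hMH : M < H) (hR : 0 < R)
    (hT : 0 < T)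
    (hF0 : F 0 = 0)
    (hFmono : ∀ c₁ c₂ : ℝ, 0 ≤ c₁ → c₁ < c₂ → (c₂ : EReal) < T → F c₁ < F c₂)
    (hFcont : ContinuousOn F {c : ℝ | 0 ≤ c ∧ (c : EReal) < T})
    (hFlt1 : ∀ c : ℝ, 0 ≤ c → (c : EReal) < T → F c < 1)
    (hFlim : ∀ y : ℝ, y < 1 → ∃ c : ℝ, 0 ≤ c ∧ (c : EReal) < T ∧ y < F c)
    (hT' : ((R / (H + M) : ℝ) : EReal) < T) :
    ∃! c : ℝ, (0 < c ∧ (c : EReal) < T) ∧ c = R / (F c * H + M) :=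
  lambda_one_equilibrium_exists_unique_general H M R T F hH hM hR hFmono hFcont hFlim hT'
end

section
/- The fraction of honest agents running a pool is maximized at λ = 1: if M/(H+M) < λ < 1 and c*(λ) ∈ (0,T) satisfies c*(λ) = λ·R/(F(c*(λ))·H + M) − (1−λ)·R/((1−F(c*(λ)))·H), and c₁ ∈ (0,T) satisfies c₁ = R/(F(c₁)·H + M), then c*(λ) < c₁, and hence F(c*(λ))·H < F(c₁)·H. -/
/-!
The equilibrium equation puts `c*(λ)` strictly below `R / (F(c*(λ))·H + M)`: for `λ < 1` the
reward term is smaller than `R / (F·H + M)` and the penalty term is positive. On the other hand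
`c₁` is a fixed point of the decreasing map `c ↦ R / (F(c)·H + M)`, and a point lying strictly
below its image under a decreasing map lies strictly below any fixed point of that map.
-/

theorem lt_of_lt_apply_of_apply_eq {α : Type*} [LinearOrder α] {s : Set α} {g : α → α}
    (hg : AntitoneOn g s) {x y : α} (hx : x ∈ s) (hy : y ∈ s) (hxg : x < g x) (hyg : g y = y) :
    x < y := by
  by_contra! hyx
  have hgy : g y < g x := by rw [hyg]; exact hyx.trans_lt hxg
  exact (hg hy hx hyx).not_gt hgy

theorem antitoneOn_div_mul_add {α : Type*} [Preorder α] {s : Set α} {F : α → ℝ} {R H M : ℝ}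
    (hR : 0 ≤ R) (hH : 0 ≤ H) (hM : 0 < M) (hF : MonotoneOn F s) (hF0 : ∀ c ∈ s, 0 ≤ F c) :
    AntitoneOn (fun c ↦ R / (F c * H + M)) s := by
  intro a ha b hb hab
  have hFa : 0 < F a * H + M := by have := hF0 a ha; positivity
  exact div_le_div_of_nonneg_left hR hFa (by gcongr; exact hF ha hb hab)

theorem mul_div_sub_mul_div_lt_div {lam R D E : ℝ} (hlam : lam < 1) (hR : 0 < R) (hD : 0 < D)
    (hE : 0 < E) : lam * R / D - (1 - lam) * R / E < R / D := by
  have hpenalty : 0 < (1 - lam) * R / E := by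
    have : 0 < 1 - lam := sub_pos.mpr hlam
    positivity
  have hreward : lam * R / D < R / D := div_lt_div_of_pos_right (by nlinarith) hD
  linarith

theorem pool_share_maximized_at_lambda_one_general
    (H M R lam : ℝ) (T : EReal) (F : ℝ → ℝ)
    (hH : 0 < H) (hM : 0 < M) (hR : 0 < R)
    (hF0 : F 0 = 0)
    (hFmono : ∀ c₁ c₂ : ℝ, 0 ≤ c₁ → c₁ < c₂ → (c₂ : EReal) < T → F c₁ < F c₂)
    (hFlt1 : ∀ c : ℝ, 0 ≤ c → (c : EReal) < T → F c < 1)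
    (hlam : M / (H + M) < lam ∧ lam < 1)
    (cstar c₁ : ℝ)
    (hcstar : 0 < cstar ∧ (cstar : EReal) < T)
    (heq : cstar = lam * R / (F cstar * H + M)
                    - (1 - lam) * R / ((1 - F cstar) * H))
    (hc₁ : 0 < c₁ ∧ (c₁ : EReal) < T)
    (heq₁ : c₁ = R / (F c₁ * H + M)) :
    cstar < c₁ ∧ F cstar * H < F c₁ * H := by
  set s := {c : ℝ | 0 < c ∧ (c : EReal) < T}
  have hFstrict : StrictMonoOn F s := fun a ha b hb hab ↦ hFmono a b ha.1.le hab hb.2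
  have hFpos : ∀ c ∈ s, 0 < F c := fun c hc ↦ hF0 ▸ hFmono 0 c le_rfl hc.1 hc.2
  have hbelow : cstar < R / (F cstar * H + M) := by
    have hD : 0 < F cstar * H + M := by have := hFpos cstar hcstar; positivity
    have hE : 0 < (1 - F cstar) * H :=
      mul_pos (sub_pos.mpr (hFlt1 cstar hcstar.1.le hcstar.2)) hH
    calc cstar = lam * R / (F cstar * H + M) - (1 - lam) * R / ((1 - F cstar) * H) := heq
      _ < R / (F cstar * H + M) := mul_div_sub_mul_div_lt_div hlam.2 hR hD hE
  have hlt : cstar < c₁ :=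
    lt_of_lt_apply_of_apply_eq
      (antitoneOn_div_mul_add hR.le hH.le hM hFstrict.monotoneOn fun c hc ↦ (hFpos c hc).le)
      hcstar hc₁ hbelow heq₁.symm
  exact ⟨hlt, mul_lt_mul_of_pos_right (hFstrict hcstar hc₁ hlt) hH⟩

/-- The fraction of honest agents running a pool is maximized at
`λ = 1`: if `M/(H+M) < λ < 1` and `c*(λ) ∈ (0,T)` is the threshold equilibrium for
`λ`, and `c₁ ∈ (0,T)` satisfies `c₁ = R/(F(c₁)·H + M)`, then `c*(λ) < c₁` and hence
`F(c*(λ))·H < F(c₁)·H`. -/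
theorem pool_share_maximized_at_lambda_one
    (H M R lam : ℝ) (T : EReal) (F : ℝ → ℝ)
    (hH : 0 < H) (hM : 0 < M) (hMH : M < H) (hR : 0 < R)
    (hT : 0 < T)
    (hF0 : F 0 = 0)
    (hFmono : ∀ c₁ c₂ : ℝ, 0 ≤ c₁ → c₁ < c₂ → (c₂ : EReal) < T → F c₁ < F c₂)
    (hFcont : ContinuousOn F {c : ℝ | 0 ≤ c ∧ (c : EReal) < T})
    (hFlt1 : ∀ c : ℝ, 0 ≤ c → (c : EReal) < T → F c < 1)
    (hFlim : ∀ y : ℝ, y < 1 → ∃ c : ℝ, 0 ≤ c ∧ (c : EReal) < T ∧ y < F c)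
    (hlam : M / (H + M) < lam ∧ lam < 1)
    (cstar c₁ : ℝ)
    (hcstar : 0 < cstar ∧ (cstar : EReal) < T)
    (heq : cstar = lam * R / (F cstar * H + M)
                    - (1 - lam) * R / ((1 - F cstar) * H))
    (hc₁ : 0 < c₁ ∧ (c₁ : EReal) < T)
    (heq₁ : c₁ = R / (F c₁ * H + M)) :
    cstar < c₁ ∧ F cstar * H < F c₁ * H :=
  pool_share_maximized_at_lambda_one_general H M R lam T F hH hM hR hF0 hFmono hFlt1 hlam cstar c₁
    hcstar heq hc₁ heq₁
end

section
/- Suppose the cost density f = F' is differentiable with f > 0 and f' ≤ 0 on (0,T) (i.e., F'' ≤ 0). If H·M ≥ (H+M)²·T, then the social welfare W is maximized on [0,T] at c = T. If H·M < (H+M)²·T, then there is a unique c° ∈ (0,T) maximizing W on [0,T]. -/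
/-!
Write `ψ(c) = HM/(F(c)H + M)² - c` for the marginal surplus. As `f ≥ 0` is the derivative of
`F`, `x f(x)` is integrable, and the fundamental theorem of calculus gives `W'(c) = H f(c) ψ(c)`.
Since `F` is nondecreasing, `ψ` is strictly decreasing; as `f > 0`, `W` increases while `ψ > 0`
and decreases once `ψ < 0`. With `ψ(0) = H/M > 0` and `ψ(T) = HM/(H+M)² - T`, either `ψ > 0` on
`[0,T)` and `W` is maximal at `T`, or `ψ` has a unique zero `c° ∈ (0,T)`, where `W` attains its
unique maximum.
-/

open Set MeasureTheory intervalIntegral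

section Unimodal

variable {W g ψ : ℝ → ℝ} {a b : ℝ}

theorem strictMonoOn_Icc_of_hasDerivAt_pos {W' : ℝ → ℝ} (hW : ContinuousOn W (Icc a b))
    (hW' : ∀ x ∈ Ioo a b, HasDerivAt W (W' x) x) (hpos : ∀ x ∈ Ioo a b, 0 < W' x) :
    StrictMonoOn W (Icc a b) :=
  strictMonoOn_of_deriv_pos (convex_Icc a b) hW fun x hx => by
    rw [interior_Icc] at hx
    exact (hW' x hx).deriv ▸ hpos x hx

theorem strictAntiOn_Icc_of_hasDerivAt_neg {W' : ℝ → ℝ} (hW : ContinuousOn W (Icc a b))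
    (hW' : ∀ x ∈ Ioo a b, HasDerivAt W (W' x) x) (hneg : ∀ x ∈ Ioo a b, W' x < 0) :
    StrictAntiOn W (Icc a b) :=
  strictAntiOn_of_deriv_neg (convex_Icc a b) hW fun x hx => by
    rw [interior_Icc] at hx
    exact (hW' x hx).deriv ▸ hneg x hx

theorem lt_of_ne_of_strictMonoOn_of_strictAntiOn {c x : ℝ} (hc : c ∈ Icc a b)
    (hmono : StrictMonoOn W (Icc a c)) (hanti : StrictAntiOn W (Icc c b)) (hx : x ∈ Icc a b)
    (hxc : x ≠ c) : W x < W c := by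
  rcases hxc.lt_or_gt with h | h
  exacts [hmono ⟨hx.1, h.le⟩ ⟨hc.1, le_rfl⟩ h, hanti ⟨le_rfl, hc.2⟩ ⟨h.le, hx.2⟩ h]

theorem le_right_of_hasDerivAt_mul_of_strictAntiOn (hab : a ≤ b) (hW : ContinuousOn W (Icc a b))
    (hW' : ∀ x ∈ Ioo a b, HasDerivAt W (g x * ψ x) x) (hg : ∀ x ∈ Ioo a b, 0 < g x)
    (hψ : StrictAntiOn ψ (Icc a b)) (hψb : 0 ≤ ψ b) :
    ∀ x ∈ Icc a b, W x ≤ W b := by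
  have hmono : StrictMonoOn W (Icc a b) := strictMonoOn_Icc_of_hasDerivAt_pos hW hW' fun x hx =>
    mul_pos (hg x hx) (hψb.trans_lt (hψ (Ioo_subset_Icc_self hx) ⟨hab, le_rfl⟩ hx.2))
  exact fun x hx => hmono.monotoneOn hx ⟨hab, le_rfl⟩ hx.2

theorem existsUnique_max_of_hasDerivAt_mul_of_strictAntiOn (hab : a ≤ b)
    (hW : ContinuousOn W (Icc a b)) (hW' : ∀ x ∈ Ioo a b, HasDerivAt W (g x * ψ x) x)
    (hg : ∀ x ∈ Ioo a b, 0 < g x) (hψ : StrictAntiOn ψ (Icc a b))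
    (hψc : ContinuousOn ψ (Icc a b)) (hψa : 0 < ψ a) (hψb : ψ b < 0) :
    ∃! c, c ∈ Ioo a b ∧ ∀ x ∈ Icc a b, W x ≤ W c := by
  obtain ⟨c, hc, hψc0⟩ := intermediate_value_Ioo' hab hψc ⟨hψb, hψa⟩
  have hcI : c ∈ Icc a b := Ioo_subset_Icc_self hc
  have hmono : StrictMonoOn W (Icc a c) :=
    strictMonoOn_Icc_of_hasDerivAt_pos (hW.mono (Icc_subset_Icc_right hc.2.le))
      (fun x hx => hW' x ⟨hx.1, hx.2.trans hc.2⟩) fun x hx =>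
        mul_pos (hg x ⟨hx.1, hx.2.trans hc.2⟩)
          (hψc0 ▸ hψ ⟨hx.1.le, hx.2.le.trans hc.2.le⟩ hcI hx.2)
  have hanti : StrictAntiOn W (Icc c b) :=
    strictAntiOn_Icc_of_hasDerivAt_neg (hW.mono (Icc_subset_Icc_left hc.1.le))
      (fun x hx => hW' x ⟨hc.1.trans hx.1, hx.2⟩) fun x hx =>
        mul_neg_of_pos_of_neg (hg x ⟨hc.1.trans hx.1, hx.2⟩)
          (hψc0 ▸ hψ hcI ⟨hc.1.le.trans hx.1.le, hx.2.le⟩ hx.1)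
  have hlt {x : ℝ} (hx : x ∈ Icc a b) (hxc : x ≠ c) : W x < W c :=
    lt_of_ne_of_strictMonoOn_of_strictAntiOn hcI hmono hanti hx hxc
  refine ⟨c, ⟨hc, fun x hx => ?_⟩, fun x ⟨hx, hxmax⟩ => ?_⟩
  · rcases eq_or_ne x c with rfl | hxc
    exacts [le_rfl, (hlt hx hxc).le]
  · by_contra hxc
    exact (hlt (Ioo_subset_Icc_self hx) hxc).not_ge (hxmax c hcI)

end Unimodal

section Welfare

variable {H M : ℝ} {F f : ℝ → ℝ}

noncomputable def welfare (H M : ℝ) (F f : ℝ → ℝ) (c : ℝ) : ℝ :=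
  F c * H ^ 2 / (F c * H + M) - H * ∫ x in (0:ℝ)..c, x * f x

noncomputable def marginalSurplus (H M : ℝ) (F : ℝ → ℝ) (c : ℝ) : ℝ :=
  H * M / (F c * H + M) ^ 2 - c

theorem hasDerivAt_welfare {s : Set ℝ} {c : ℝ} (hF : HasDerivAt F (f c) c)
    (hden : F c * H + M ≠ 0) (hint : IntervalIntegrable (fun x => x * f x) volume 0 c)
    (hs : IsOpen s) (hfs : ContinuousOn f s) (hc : c ∈ s) :
    HasDerivAt (welfare H M F f) (H * f c * marginalSurplus H M F c) c := by
  have hgs : ContinuousOn (fun x => x * f x) s := continuousOn_id.mul hfs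
  have hprim : HasDerivAt (fun u => ∫ x in (0:ℝ)..u, x * f x) (c * f c) c :=
    integral_hasDerivAt_right hint (hgs.stronglyMeasurableAtFilter hs c hc)
      (hgs.continuousAt (hs.mem_nhds hc))
  refine (((hF.mul_const (H ^ 2)).div ((hF.mul_const H).add_const M) hden).sub
    (hprim.const_mul H)).congr_deriv ?_
  rw [marginalSurplus]
  field_simp
  ring

theorem continuousOn_welfare {T : ℝ} (hT : 0 ≤ T) (hF : ContinuousOn F (Icc 0 T))
    (hden : ∀ c ∈ Icc 0 T, F c * H + M ≠ 0)
    (hint : IntervalIntegrable (fun x => x * f x) volume 0 T) :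
    ContinuousOn (welfare H M F f) (Icc 0 T) := by
  have hprim := continuousOn_primitive_interval' hint left_mem_uIcc
  rw [uIcc_of_le hT] at hprim
  exact ((hF.mul continuousOn_const).div ((hF.mul continuousOn_const).add continuousOn_const)
    hden).sub (continuousOn_const.mul hprim)

variable {s : Set ℝ}

theorem strictAntiOn_marginalSurplus (hH : 0 ≤ H) (hM : 0 < M) (hFs : ∀ c ∈ s, 0 ≤ F c)
    (hF : MonotoneOn F s) :
    StrictAntiOn (marginalSurplus H M F) s := by
  intro a ha b hb hab
  have hden : 0 < F a * H + M := by have := hFs a ha; positivity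
  have hle : F a * H + M ≤ F b * H + M := by gcongr; exact hF ha hb hab.le
  have : H * M / (F b * H + M) ^ 2 ≤ H * M / (F a * H + M) ^ 2 := by gcongr
  unfold marginalSurplus
  linarith

theorem continuousOn_marginalSurplus (hH : 0 ≤ H) (hM : 0 < M) (hFs : ∀ c ∈ s, 0 ≤ F c)
    (hF : ContinuousOn F s) :
    ContinuousOn (marginalSurplus H M F) s :=
  (continuousOn_const.div (((hF.mul continuousOn_const).add continuousOn_const).pow 2)
    fun c hc => pow_ne_zero 2 (add_pos_of_nonneg_of_pos (mul_nonneg (hFs c hc) hH) hM).ne').sub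
    continuousOn_id

end Welfare

theorem welfare_maximizer_characterization_general
    (H M T : ℝ) (F f f' W : ℝ → ℝ)
    (hH : 0 < H) (hM : 0 < M) (hT : 0 < T)
    (hF0 : F 0 = 0) (hFT : F T = 1)
    (hFmono : StrictMonoOn F (Set.Icc 0 T))
    (hf : ∀ c ∈ Set.Icc (0:ℝ) T, HasDerivAt F (f c) c)
    (hf' : ∀ c ∈ Set.Ioo (0:ℝ) T, HasDerivAt f (f' c) c)
    (hfpos : ∀ c ∈ Set.Ioo (0:ℝ) T, 0 < f c)
    (hW : ∀ c : ℝ, W c = F c * H ^ 2 / (F c * H + M) - H * ∫ x in (0:ℝ)..c, x * f x) :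
    (H * M ≥ (H + M) ^ 2 * T → ∀ c ∈ Set.Icc (0:ℝ) T, W c ≤ W T) ∧
    (H * M < (H + M) ^ 2 * T →
      ∃! c : ℝ, c ∈ Set.Ioo (0:ℝ) T ∧ ∀ x ∈ Set.Icc (0:ℝ) T, W x ≤ W c) := by
  obtain rfl : W = welfare H M F f := funext hW
  have hFc : ContinuousOn F (Icc 0 T) := fun c hc => (hf c hc).continuousAt.continuousWithinAt
  have hfc : ContinuousOn f (Ioo 0 T) := fun c hc => (hf' c hc).continuousAt.continuousWithinAt
  have hFnn : ∀ c ∈ Icc 0 T, 0 ≤ F c := fun c hc =>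
    hF0 ▸ hFmono.monotoneOn ⟨le_rfl, hT.le⟩ hc hc.1
  have hden : ∀ c ∈ Icc 0 T, F c * H + M ≠ 0 := fun c hc => by have := hFnn c hc; positivity
  have hint : IntervalIntegrable (fun x => x * f x) volume 0 T := by
    refine (intervalIntegrable_deriv_of_nonneg (g := F) ?_ ?_ ?_).continuousOn_mul continuousOn_id
    all_goals simp only [uIcc_of_le hT.le, min_eq_left hT.le, max_eq_right hT.le]
    exacts [hFc, fun x hx => hf x (Ioo_subset_Icc_self hx), fun x hx => (hfpos x hx).le]
  have hW' (c) (hc : c ∈ Ioo 0 T) :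
      HasDerivAt (welfare H M F f) (H * f c * marginalSurplus H M F c) c := by
    have hcI : c ∈ Icc 0 T := Ioo_subset_Icc_self hc
    refine hasDerivAt_welfare (hf c hcI) (hden c hcI) (hint.mono_set ?_) isOpen_Ioo hfc hc
    exact uIcc_subset_uIcc_left (uIcc_of_le hT.le ▸ hcI)
  have hWc := continuousOn_welfare hT.le hFc hden hint
  have hg : ∀ x ∈ Ioo 0 T, 0 < H * f x := fun x hx => mul_pos hH (hfpos x hx)
  have hψ := strictAntiOn_marginalSurplus hH.le hM hFnn hFmono.monotoneOn
  have hψT : marginalSurplus H M F T = H * M / (H + M) ^ 2 - T := by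
    simp only [marginalSurplus, hFT, one_mul]
  refine ⟨fun hge => ?_, fun hlt => ?_⟩
  · refine le_right_of_hasDerivAt_mul_of_strictAntiOn hT.le hWc hW' hg hψ ?_
    rw [hψT, sub_nonneg, le_div_iff₀ (by positivity)]
    linarith
  · refine existsUnique_max_of_hasDerivAt_mul_of_strictAntiOn hT.le hWc hW' hg hψ
      (continuousOn_marginalSurplus hH.le hM hFnn hFc) ?_ ?_
    · simp only [marginalSurplus, hF0, zero_mul, zero_add, sub_zero]
      positivity
    · rw [hψT, sub_neg, div_lt_iff₀ (by positivity)]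
      linarith

/-- Suppose the cost density `f = F'` is differentiable with `f > 0` and
`f' ≤ 0` on `(0,T)` (i.e. `F'' ≤ 0`). If `H·M ≥ (H+M)²·T`, then the social welfare `W`
is maximized on `[0,T]` at `c = T`. If `H·M < (H+M)²·T`, then there is a unique
`c° ∈ (0,T)` maximizing `W` on `[0,T]`. -/
theorem welfare_maximizer_characterization
    (H M T : ℝ) (F f f' W : ℝ → ℝ)
    (hH : 0 < H) (hM : 0 < M) (hMH : M < H) (hT : 0 < T)
    (hF0 : F 0 = 0) (hFT : F T = 1)
    (hFmono : StrictMonoOn F (Set.Icc 0 T))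
    (hf : ∀ c ∈ Set.Icc (0:ℝ) T, HasDerivAt F (f c) c)
    (hf' : ∀ c ∈ Set.Ioo (0:ℝ) T, HasDerivAt f (f' c) c)
    (hfpos : ∀ c ∈ Set.Ioo (0:ℝ) T, 0 < f c)
    (hf'nonpos : ∀ c ∈ Set.Ioo (0:ℝ) T, f' c ≤ 0)
    (hW : ∀ c : ℝ, W c = F c * H ^ 2 / (F c * H + M) - H * ∫ x in (0:ℝ)..c, x * f x) :
    (H * M ≥ (H + M) ^ 2 * T → ∀ c ∈ Set.Icc (0:ℝ) T, W c ≤ W T) ∧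
    (H * M < (H + M) ^ 2 * T →
      ∃! c : ℝ, c ∈ Set.Ioo (0:ℝ) T ∧ ∀ x ∈ Set.Icc (0:ℝ) T, W x ≤ W c) :=
  welfare_maximizer_characterization_general H M T F f f' W hH hM hT hF0 hFT hFmono hf hf' hfpos hW
end

section
/- For a uniform cost distribution on [0,1], rewards to malicious agents are minimized at λ = M/(H+M): define for c ∈ [0,1) the equilibrium reward share λ(c) = (c + R/((1−c)·H)) / (R/(c·H + M) + R/((1−c)·H)) and the malicious reward share μ(c) = M·λ(c)/(c·H + M). Then μ(0) = M/(H+M), and μ(c) ≥ M/(H+M) for all c ∈ [0, c₁], where c₁ = (−M + √(M² + 4·H·R))/(2·H) is the equilibrium threshold corresponding to λ = 1 (assume c₁ < 1). -/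
/-! Clearing denominators, the malicious reward share at threshold `c` is
`M (c (1 - c) H + R) / (R (H + M))`. It equals `M / (H + M)` at `c = 0` and exceeds it by the
nonnegative amount `M c (1 - c) H / (R (H + M))` for `c ∈ [0, 1)`, in particular on `[0, c₁]`. -/

noncomputable section

namespace UniformCost

/-- The equilibrium reward share `λ(c)`. -/
def rewardShare (H M R c : ℝ) : ℝ :=
  (c + R / ((1 - c) * H)) / (R / (c * H + M) + R / ((1 - c) * H))

/-- The malicious reward share `μ(c)`. -/
def maliciousShare (H M R c : ℝ) : ℝ :=
  M * rewardShare H M R c / (c * H + M)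

variable {H M R c : ℝ}

theorem rewardShare_eq (hR : R ≠ 0) (hHM : H + M ≠ 0) (hcHM : c * H + M ≠ 0)
    (hH : H ≠ 0) (hc : 1 - c ≠ 0) :
    rewardShare H M R c = (c * (1 - c) * H + R) * (c * H + M) / (R * (H + M)) := by
  have hden : R / (c * H + M) + R / ((1 - c) * H) = R * (H + M) / ((c * H + M) * ((1 - c) * H)) := by
    field_simp
    ring
  rw [rewardShare, hden]
  field_simp

theorem maliciousShare_eq (hR : R ≠ 0) (hHM : H + M ≠ 0) (hcHM : c * H + M ≠ 0)
    (hH : H ≠ 0) (hc : 1 - c ≠ 0) :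
    maliciousShare H M R c = M * (c * (1 - c) * H + R) / (R * (H + M)) := by
  rw [maliciousShare, rewardShare_eq hR hHM hcHM hH hc]
  field_simp

theorem maliciousShare_zero (hH : H ≠ 0) (hM : M ≠ 0) (hR : R ≠ 0) (hHM : H + M ≠ 0) :
    maliciousShare H M R 0 = M / (H + M) := by
  rw [maliciousShare_eq hR hHM (by simpa using hM) hH (by norm_num)]
  field_simp
  ring

theorem div_le_maliciousShare (hH : 0 < H) (hM : 0 < M) (hR : 0 < R) (hc₀ : 0 ≤ c)
    (hc₁ : c < 1) : M / (H + M) ≤ maliciousShare H M R c := by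
  have hHM : 0 < H + M := by positivity
  rw [maliciousShare_eq hR.ne' hHM.ne' (by positivity) hH.ne' (by linarith)]
  calc M / (H + M) = M * (0 + R) / (R * (H + M)) := by rw [zero_add]; field_simp
    _ ≤ M * (c * (1 - c) * H + R) / (R * (H + M)) := by
      gcongr
      have : 0 ≤ 1 - c := by linarith
      positivity

end UniformCost

end

open UniformCost in
theorem uniform_malicious_reward_minimized_at_boundary_general
    (H M R c₁ : ℝ)
    (hH : 0 < H) (hM : 0 < M) (hR : 0 < R)
    (hc₁lt : c₁ < 1) :
    M * ((0 + R / ((1 - 0) * H)) / (R / (0 * H + M) + R / ((1 - 0) * H)))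
        / (0 * H + M) = M / (H + M) ∧
    ∀ c : ℝ, 0 ≤ c → c ≤ c₁ →
      M / (H + M)
        ≤ M * ((c + R / ((1 - c) * H)) / (R / (c * H + M) + R / ((1 - c) * H)))
            / (c * H + M) :=
  ⟨maliciousShare_zero hH.ne' hM.ne' hR.ne' (add_pos hH hM).ne',
    fun _ hc₀ hc => div_le_maliciousShare hH hM hR hc₀ (hc.trans_lt hc₁lt)⟩

/-- For a uniform cost distribution on `[0,1]`, rewards to malicious
agents are minimized at `λ = M/(H+M)`: with the equilibrium reward share
`λ(c) = (c + R/((1−c)·H)) / (R/(c·H + M) + R/((1−c)·H))` and malicious reward share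
`μ(c) = M·λ(c)/(c·H + M)` for `c ∈ [0,1)`, one has `μ(0) = M/(H+M)` and
`μ(c) ≥ M/(H+M)` for all `c ∈ [0, c₁]`, where
`c₁ = (−M + √(M² + 4·H·R))/(2·H)` (assumed `< 1`) is the equilibrium threshold for
`λ = 1`. -/
theorem uniform_malicious_reward_minimized_at_boundary
    (H M R c₁ : ℝ)
    (hH : 0 < H) (hM : 0 < M) (hMH : M < H) (hR : 0 < R)
    (hc₁ : c₁ = (-M + Real.sqrt (M ^ 2 + 4 * H * R)) / (2 * H))
    (hc₁lt : c₁ < 1) :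
    M * ((0 + R / ((1 - 0) * H)) / (R / (0 * H + M) + R / ((1 - 0) * H)))
        / (0 * H + M) = M / (H + M) ∧
    ∀ c : ℝ, 0 ≤ c → c ≤ c₁ →
      M / (H + M)
        ≤ M * ((c + R / ((1 - c) * H)) / (R / (c * H + M) + R / ((1 - c) * H)))
            / (c * H + M) :=
  uniform_malicious_reward_minimized_at_boundary_general H M R c₁ hH hM hR hc₁lt
end

section
/- With delegation cost c_d > 0, for λ ∈ (0,1): there exists a unique c*_d ∈ (0,T) satisfying c*_d = λ·R/(F(c*_d)·H + M) − (1−λ)·R/((1−F(c*_d))·H) + c_d if and only if λ > (M·R − c_d·M·H)/((H+M)·R). Moreover, if additionally λ > M/(H+M), so that the zero-delegation-cost threshold equilibrium c* ∈ (0,T) with c* = λ·R/(F(c*)·H + M) − (1−λ)·R/((1−F(c*))·H) exists, then c*_d > c*. -/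
/-!
Write `g c = c - payoffGap (F c)` for the excess of the cost over the net reward of running a
pool, so that the equilibria are the solutions of `g c = c_d`. Since `F` is strictly increasing
and the payoff gap is strictly decreasing in the fraction of honest pool operators, `g` is
strictly increasing on `[0, T)`. This gives uniqueness, and `c* < c*_d` because
`g c* = 0 < c_d = g c*_d`. As `F c → 1` the second term of the gap tends to `-∞`, so `g` is
unbounded above, and by the intermediate value theorem an equilibrium exists exactly when
`g 0 < c_d`, which rearranges to the stated bound on `λ`.
-/

open Set Filter Topology

namespace CostlyDelegation

variable {H M R lam : ℝ}

/-- The right-hand side of the indifference condition, without `c_d`, as a function of `x = F c`. -/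
noncomputable def payoffGap (H M R lam x : ℝ) : ℝ :=
  lam * R / (x * H + M) - (1 - lam) * R / ((1 - x) * H)

theorem zero_lt_payoffGap_zero_add_iff (hH : 0 < H) (hM : 0 < M) (hR : 0 < R) (cd : ℝ) :
    0 < payoffGap H M R lam 0 + cd ↔ (M * R - cd * M * H) / ((H + M) * R) < lam := by
  have hgap : payoffGap H M R lam 0 + cd
      = (lam * ((H + M) * R) - (M * R - cd * M * H)) / (M * H) := by
    simp only [payoffGap]
    field_simp
    ring
  rw [hgap, div_lt_iff₀ (by positivity), div_pos_iff_of_pos_right (by positivity), sub_pos]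

theorem payoffGap_strictAntiOn (hH : 0 < H) (hM : 0 < M) (hR : 0 < R) (hlam0 : 0 < lam)
    (hlam1 : lam ≤ 1) : StrictAntiOn (payoffGap H M R lam) (Ico 0 1) := by
  intro x hx y hy hxy
  have hfirst : lam * R / (y * H + M) < lam * R / (x * H + M) :=
    div_lt_div_of_pos_left (by positivity) (by nlinarith [hx.1]) (by nlinarith)
  have hsecond : (1 - lam) * R / ((1 - x) * H) ≤ (1 - lam) * R / ((1 - y) * H) :=
    div_le_div_of_nonneg_left (by nlinarith) (by nlinarith [hy.2]) (by nlinarith)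
  simp only [payoffGap]
  linarith

theorem continuousOn_payoffGap (hH : 0 < H) (hM : 0 < M) :
    ContinuousOn (payoffGap H M R lam) (Ico 0 1) := by
  refine ContinuousOn.sub (continuousOn_const.div (by fun_prop) fun x hx => ?_)
    (continuousOn_const.div (by fun_prop) fun x hx => ?_)
  · nlinarith [hx.1]
  · nlinarith [hx.2]

theorem tendsto_payoffGap_nhdsLT_one (hH : 0 < H) (hM : 0 < M) (hR : 0 < R) (hlam : lam < 1) :
    Tendsto (payoffGap H M R lam) (𝓝[<] 1) atBot := by
  have hfirst : Tendsto (fun x => lam * R / (x * H + M)) (𝓝[<] 1)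
      (𝓝 (lam * R / (1 * H + M))) :=
    ((continuousAt_const.div (by fun_prop) (by positivity)).tendsto).mono_left
      nhdsWithin_le_nhds
  have hdenom : Tendsto (fun x => (1 - x) * H) (𝓝[<] 1) (𝓝[>] 0) := by
    refine tendsto_nhdsWithin_of_tendsto_nhds_of_eventually_within _ ?_ ?_
    · exact ((by fun_prop : Continuous fun x : ℝ => (1 - x) * H).tendsto' 1 0 (by ring)).mono_left
        nhdsWithin_le_nhds
    · filter_upwards [self_mem_nhdsWithin] with x hx
      exact mul_pos (sub_pos.2 hx) hH
  have hsecond : Tendsto (fun x => (1 - lam) * R / ((1 - x) * H)) (𝓝[<] 1) atTop :=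
    hdenom.inv_tendsto_nhdsGT_zero.const_mul_atTop (by nlinarith)
  exact hfirst.add_atBot (tendsto_neg_atTop_atBot.comp hsecond)

theorem eq_payoffGap_iff {c x : ℝ} :
    c = lam * R / (x * H + M) - (1 - lam) * R / ((1 - x) * H) ↔
      c - payoffGap H M R lam x = 0 :=
  sub_eq_zero.symm

theorem eq_payoffGap_add_iff {c x d : ℝ} :
    c = lam * R / (x * H + M) - (1 - lam) * R / ((1 - x) * H) + d ↔
      c - payoffGap H M R lam x = d :=
  sub_eq_iff_eq_add'.symm

section Distribution

variable {F : ℝ → ℝ}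

theorem strictMonoOn_sub_payoffGap_comp {S : Set ℝ} (hH : 0 < H) (hM : 0 < M) (hR : 0 < R)
    (hlam0 : 0 < lam) (hlam1 : lam ≤ 1) (hF : StrictMonoOn F S) (hFS : MapsTo F S (Ico 0 1)) :
    StrictMonoOn (fun c => c - payoffGap H M R lam (F c)) S := by
  intro a ha b hb hab
  have := payoffGap_strictAntiOn hH hM hR hlam0 hlam1 (hFS ha) (hFS hb) (hF ha hb hab)
  dsimp only
  linarith

theorem continuousOn_sub_payoffGap_comp {S : Set ℝ} (hH : 0 < H) (hM : 0 < M)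
    (hF : ContinuousOn F S) (hFS : MapsTo F S (Ico 0 1)) :
    ContinuousOn (fun c => c - payoffGap H M R lam (F c)) S :=
  continuousOn_id.sub <| (continuousOn_payoffGap hH hM).comp hF hFS

variable {T : EReal}

theorem mapsTo_Ico_zero_one (hF0 : F 0 = 0)
    (hFmono : ∀ c₁ c₂ : ℝ, 0 ≤ c₁ → c₁ < c₂ → (c₂ : EReal) < T → F c₁ < F c₂)
    (hFlt1 : ∀ c : ℝ, 0 ≤ c → (c : EReal) < T → F c < 1) :
    MapsTo F {c : ℝ | 0 ≤ c ∧ (c : EReal) < T} (Ico 0 1) := by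
  rintro c ⟨hc0, hcT⟩
  refine ⟨?_, hFlt1 c hc0 hcT⟩
  rcases hc0.eq_or_lt with rfl | hpos
  · exact hF0.ge
  · exact hF0 ▸ (hFmono 0 c le_rfl hpos hcT).le

theorem exists_lt_sub_payoffGap_comp (hH : 0 < H) (hM : 0 < M) (hR : 0 < R) (hlam : lam < 1)
    (hFlt1 : ∀ c : ℝ, 0 ≤ c → (c : EReal) < T → F c < 1)
    (hFlim : ∀ y : ℝ, y < 1 → ∃ c : ℝ, 0 ≤ c ∧ (c : EReal) < T ∧ y < F c) (K : ℝ) :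
    ∃ b : ℝ, (0 ≤ b ∧ (b : EReal) < T) ∧ K < b - payoffGap H M R lam (F b) := by
  obtain ⟨y, hy, hgap⟩ := mem_nhdsLT_iff_exists_Ioo_subset.1
    ((tendsto_payoffGap_nhdsLT_one hH hM hR hlam).eventually (eventually_lt_atBot (-K)))
  obtain ⟨b, hb0, hbT, hyb⟩ := hFlim y hy
  have : payoffGap H M R lam (F b) < -K := hgap ⟨hyb, hFlt1 b hb0 hbT⟩
  exact ⟨b, ⟨hb0, hbT⟩, by linarith⟩

theorem existsUnique_sub_payoffGap_comp_eq_iff (hH : 0 < H) (hM : 0 < M) (hR : 0 < R)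
    (hlam : 0 < lam ∧ lam < 1) (hF0 : F 0 = 0)
    (hFmono : ∀ c₁ c₂ : ℝ, 0 ≤ c₁ → c₁ < c₂ → (c₂ : EReal) < T → F c₁ < F c₂)
    (hFcont : ContinuousOn F {c : ℝ | 0 ≤ c ∧ (c : EReal) < T})
    (hFlt1 : ∀ c : ℝ, 0 ≤ c → (c : EReal) < T → F c < 1)
    (hFlim : ∀ y : ℝ, y < 1 → ∃ c : ℝ, 0 ≤ c ∧ (c : EReal) < T ∧ y < F c) (d : ℝ) :
    (∃! c : ℝ, (0 < c ∧ (c : EReal) < T) ∧ c - payoffGap H M R lam (F c) = d) ↔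
      0 < payoffGap H M R lam 0 + d := by
  set g := fun c => c - payoffGap H M R lam (F c)
  have hFS := mapsTo_Ico_zero_one hF0 hFmono hFlt1
  have hmono : StrictMonoOn g {c : ℝ | 0 ≤ c ∧ (c : EReal) < T} :=
    strictMonoOn_sub_payoffGap_comp hH hM hR hlam.1 hlam.2.le
      (fun a ha b hb hab => hFmono a b ha.1 hab hb.2) hFS
  have hg0 : g 0 = -payoffGap H M R lam 0 := by simp [g, hF0]
  constructor
  · rintro ⟨c, ⟨hc, hgc⟩, -⟩
    have hlt := hmono ⟨le_rfl, (EReal.coe_lt_coe_iff.2 hc.1).trans hc.2⟩ ⟨hc.1.le, hc.2⟩ hc.1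
    rw [hg0] at hlt
    change _ < g c at hlt
    linarith
  · intro hd
    obtain ⟨b, hb, hgb⟩ := exists_lt_sub_payoffGap_comp hH hM hR hlam.2 hFlt1 hFlim d
    have hIcc : Icc 0 b ⊆ {c : ℝ | 0 ≤ c ∧ (c : EReal) < T} := fun c hc =>
      ⟨hc.1, (EReal.coe_le_coe_iff.2 hc.2).trans_lt hb.2⟩
    obtain ⟨c, hc, hgc⟩ := intermediate_value_Ioo hb.1
      ((continuousOn_sub_payoffGap_comp hH hM hFcont hFS).mono hIcc) ⟨by linarith, hgb⟩
    refine ⟨c, ⟨⟨hc.1, (EReal.coe_lt_coe_iff.2 hc.2).trans hb.2⟩, hgc⟩, ?_⟩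
    rintro c' ⟨hc', hgc'⟩
    exact hmono.injOn ⟨hc'.1.le, hc'.2⟩ (hIcc (Ioo_subset_Icc_self hc)) (hgc'.trans hgc.symm)

end Distribution

end CostlyDelegation

open CostlyDelegation

theorem costly_delegation_equilibrium_general
    (H M R lam cd : ℝ) (T : EReal) (F : ℝ → ℝ)
    (hH : 0 < H) (hM : 0 < M) (hR : 0 < R)
    (hF0 : F 0 = 0)
    (hFmono : ∀ c₁ c₂ : ℝ, 0 ≤ c₁ → c₁ < c₂ → (c₂ : EReal) < T → F c₁ < F c₂)
    (hFcont : ContinuousOn F {c : ℝ | 0 ≤ c ∧ (c : EReal) < T})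
    (hFlt1 : ∀ c : ℝ, 0 ≤ c → (c : EReal) < T → F c < 1)
    (hFlim : ∀ y : ℝ, y < 1 → ∃ c : ℝ, 0 ≤ c ∧ (c : EReal) < T ∧ y < F c)
    (hcd : 0 < cd) (hlam : 0 < lam ∧ lam < 1) :
    ((∃! c : ℝ, (0 < c ∧ (c : EReal) < T) ∧
        c = lam * R / (F c * H + M) - (1 - lam) * R / ((1 - F c) * H) + cd)
      ↔ (M * R - cd * M * H) / ((H + M) * R) < lam) ∧
    (M / (H + M) < lam →
      ∀ cstar cstard : ℝ,
        (0 < cstar ∧ (cstar : EReal) < T) →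
        cstar = lam * R / (F cstar * H + M) - (1 - lam) * R / ((1 - F cstar) * H) →
        (0 < cstard ∧ (cstard : EReal) < T) →
        cstard = lam * R / (F cstard * H + M)
                  - (1 - lam) * R / ((1 - F cstard) * H) + cd →
        cstar < cstard) := by
  refine ⟨?_, fun _ cstar cstard hs hseq hd hdeq => ?_⟩
  · simp only [eq_payoffGap_add_iff]
    rw [← zero_lt_payoffGap_zero_add_iff hH hM hR]
    exact existsUnique_sub_payoffGap_comp_eq_iff hH hM hR hlam hF0 hFmono hFcont hFlt1 hFlim cd
  · have hmono := strictMonoOn_sub_payoffGap_comp hH hM hR hlam.1 hlam.2.le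
      (fun a ha b hb hab => hFmono a b ha.1 hab hb.2) (mapsTo_Ico_zero_one hF0 hFmono hFlt1)
    refine (hmono.lt_iff_lt ⟨hs.1.le, hs.2⟩ ⟨hd.1.le, hd.2⟩).1 ?_
    simp only [eq_payoffGap_iff.1 hseq, eq_payoffGap_add_iff.1 hdeq, hcd]

/-- With delegation cost `c_d > 0` and `λ ∈ (0,1)`: there exists a
unique `c*_d ∈ (0,T)` satisfying
`c*_d = λ·R/(F(c*_d)·H + M) − (1−λ)·R/((1−F(c*_d))·H) + c_d` if and only if
`λ > (M·R − c_d·M·H)/((H+M)·R)`. Moreover, if additionally `λ > M/(H+M)`, so that the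
zero-delegation-cost threshold equilibrium `c* ∈ (0,T)` exists, then `c*_d > c*`. -/
theorem costly_delegation_equilibrium
    (H M R lam cd : ℝ) (T : EReal) (F : ℝ → ℝ)
    (hH : 0 < H) (hM : 0 < M) (hMH : M < H) (hR : 0 < R)
    (hT : 0 < T)
    (hF0 : F 0 = 0)
    (hFmono : ∀ c₁ c₂ : ℝ, 0 ≤ c₁ → c₁ < c₂ → (c₂ : EReal) < T → F c₁ < F c₂)
    (hFcont : ContinuousOn F {c : ℝ | 0 ≤ c ∧ (c : EReal) < T})
    (hFlt1 : ∀ c : ℝ, 0 ≤ c → (c : EReal) < T → F c < 1)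
    (hFlim : ∀ y : ℝ, y < 1 → ∃ c : ℝ, 0 ≤ c ∧ (c : EReal) < T ∧ y < F c)
    (hcd : 0 < cd) (hlam : 0 < lam ∧ lam < 1) :
    ((∃! c : ℝ, (0 < c ∧ (c : EReal) < T) ∧
        c = lam * R / (F c * H + M) - (1 - lam) * R / ((1 - F c) * H) + cd)
      ↔ (M * R - cd * M * H) / ((H + M) * R) < lam) ∧
    (M / (H + M) < lam →
      ∀ cstar cstard : ℝ,
        (0 < cstar ∧ (cstar : EReal) < T) →
        cstar = lam * R / (F cstar * H + M) - (1 - lam) * R / ((1 - F cstar) * H) →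
        (0 < cstard ∧ (cstard : EReal) < T) →
        cstard = lam * R / (F cstard * H + M)
                  - (1 - lam) * R / ((1 - F cstard) * H) + cd →
        cstar < cstard) :=
  costly_delegation_equilibrium_general H M R lam cd T F hH hM hR hF0 hFmono hFcont hFlt1 hFlim hcd
    hlam
end

section
/- With costly delegation, blockchain security never exceeds the benchmark: let c_d > 0 and λ ∈ (0,1], and suppose c ∈ (0,T) satisfies both c = λ·R/(F(c)·H + M) − (1−λ)·R/((1−F(c))·H) + c_d and (1−λ)·R/((1−F(c))·H) ≥ c_d, and let c₁ ∈ (0,T) satisfy c₁ = R/(F(c₁)·H + M). Then c ≤ c₁, and hence F(c)·H ≤ F(c₁)·H. -/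
/-!
The benchmark map `c ↦ R / (F(c)·H + M)` is antitone, and `c₁` is its fixed point. Because
`λ ≤ 1` and the delegation payoff dominates `c_d`, the equilibrium condition puts `c` below its
image under the benchmark map; a point lying below its image under an antitone map lies below
every fixed point of that map.
-/

theorem AntitoneOn.le_of_le_apply_of_apply_le {α : Type*} [LinearOrder α] {φ : α → α}
    {s : Set α} (hφ : AntitoneOn φ s) {a b : α} (ha : a ∈ s) (hb : b ∈ s) (ha' : a ≤ φ a)
    (hb' : φ b ≤ b) : a ≤ b := by
  by_contra! hba
  exact lt_irrefl a (((ha'.trans (hφ hb ha hba.le)).trans hb').trans_lt hba)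

noncomputable def benchmarkCost (H M R : ℝ) (F : ℝ → ℝ) (c : ℝ) : ℝ :=
  R / (F c * H + M)

theorem antitoneOn_benchmarkCost {H M R : ℝ} {F : ℝ → ℝ} {s : Set ℝ} (hR : 0 ≤ R)
    (hH : 0 ≤ H) (hF : MonotoneOn F s) (hden : ∀ x ∈ s, 0 < F x * H + M) :
    AntitoneOn (benchmarkCost H M R F) s := fun a ha _ hb hab =>
  div_le_div_of_nonneg_left hR (hden a ha)
    (add_le_add_left (mul_le_mul_of_nonneg_right (hF ha hb hab) hH) M)

theorem le_benchmarkCost_of_eq_sub_add {H M R lam q cd c : ℝ} {F : ℝ → ℝ} (hlam : lam ≤ 1)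
    (hR : 0 ≤ R) (hden : 0 < F c * H + M) (hq : cd ≤ q)
    (heq : c = lam * R / (F c * H + M) - q + cd) : c ≤ benchmarkCost H M R F c := by
  have : lam * R / (F c * H + M) ≤ R / (F c * H + M) :=
    div_le_div_of_nonneg_right (mul_le_of_le_one_left hR hlam) hden.le
  unfold benchmarkCost
  linarith

theorem costly_delegation_security_below_benchmark_general
    (H M R lam cd : ℝ) (T : EReal) (F : ℝ → ℝ)
    (hH : 0 < H) (hM : 0 < M) (hR : 0 < R)
    (hF0 : F 0 = 0)
    (hFmono : ∀ c₁ c₂ : ℝ, 0 ≤ c₁ → c₁ < c₂ → (c₂ : EReal) < T → F c₁ < F c₂)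
    (hlam : 0 < lam ∧ lam ≤ 1)
    (c c₁ : ℝ)
    (hc : 0 < c ∧ (c : EReal) < T)
    (heq : c = lam * R / (F c * H + M) - (1 - lam) * R / ((1 - F c) * H) + cd)
    (hidle : cd ≤ (1 - lam) * R / ((1 - F c) * H))
    (hc₁ : 0 < c₁ ∧ (c₁ : EReal) < T)
    (heq₁ : c₁ = R / (F c₁ * H + M)) :
    c ≤ c₁ ∧ F c * H ≤ F c₁ * H := by
  set S := {x : ℝ | 0 < x ∧ (x : EReal) < T}
  have hFS : StrictMonoOn F S := fun a ha b hb hab => hFmono a b ha.1.le hab hb.2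
  have hden : ∀ x ∈ S, 0 < F x * H + M := fun x hx => by
    have : 0 < F x := hF0 ▸ hFmono 0 x le_rfl hx.1 hx.2
    positivity
  have hle : c ≤ c₁ :=
    (antitoneOn_benchmarkCost hR.le hH.le hFS.monotoneOn hden).le_of_le_apply_of_apply_le hc hc₁
      (le_benchmarkCost_of_eq_sub_add hlam.2 hR.le (hden c hc) hidle heq) heq₁.ge
  exact ⟨hle, mul_le_mul_of_nonneg_right (hFS.monotoneOn hc hc₁ hle) hH.le⟩

/-- With costly delegation, blockchain security never exceeds the
benchmark: let `c_d > 0` and `λ ∈ (0,1]`, and suppose `c ∈ (0,T)` satisfies both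
`c = λ·R/(F(c)·H + M) − (1−λ)·R/((1−F(c))·H) + c_d` and
`(1−λ)·R/((1−F(c))·H) ≥ c_d`, and let `c₁ ∈ (0,T)` satisfy `c₁ = R/(F(c₁)·H + M)`.
Then `c ≤ c₁`, and hence `F(c)·H ≤ F(c₁)·H`. -/
theorem costly_delegation_security_below_benchmark
    (H M R lam cd : ℝ) (T : EReal) (F : ℝ → ℝ)
    (hH : 0 < H) (hM : 0 < M) (hMH : M < H) (hR : 0 < R)
    (hT : 0 < T)
    (hF0 : F 0 = 0)
    (hFmono : ∀ c₁ c₂ : ℝ, 0 ≤ c₁ → c₁ < c₂ → (c₂ : EReal) < T → F c₁ < F c₂)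
    (hFcont : ContinuousOn F {c : ℝ | 0 ≤ c ∧ (c : EReal) < T})
    (hFlt1 : ∀ c : ℝ, 0 ≤ c → (c : EReal) < T → F c < 1)
    (hFlim : ∀ y : ℝ, y < 1 → ∃ c : ℝ, 0 ≤ c ∧ (c : EReal) < T ∧ y < F c)
    (hcd : 0 < cd) (hlam : 0 < lam ∧ lam ≤ 1)
    (c c₁ : ℝ)
    (hc : 0 < c ∧ (c : EReal) < T)
    (heq : c = lam * R / (F c * H + M) - (1 - lam) * R / ((1 - F c) * H) + cd)
    (hidle : cd ≤ (1 - lam) * R / ((1 - F c) * H))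
    (hc₁ : 0 < c₁ ∧ (c₁ : EReal) < T)
    (heq₁ : c₁ = R / (F c₁ * H + M)) :
    c ≤ c₁ ∧ F c * H ≤ F c₁ * H :=
  costly_delegation_security_below_benchmark_general H M R lam cd T F hH hM hR hF0 hFmono hlam c c₁
    hc heq hidle hc₁ heq₁
end

section
/- Endogenous rewards: fix a security threshold cost c^θ ∈ [0,T) and let λ ∈ (0,1). There exists a unique c* ∈ (c^θ, T) satisfying c* = λ·R/(F(c*)·H + M) − (1−λ)·R/((1−F(c*))·H) if and only if λ > ((c^θ/R)·(F(c^θ)·H + M)·(1−F(c^θ))·H + F(c^θ)·H + M) / (H + M). -/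
/-!
The break-even cost `B p = λR/(pH + M) − (1 − λ)R/((1 − p)H)` of an agent when a share `p` of
the honest agents participates is continuous and strictly decreasing on `[0, 1)`, and tends to
`−∞` as `p → 1`. So `c ↦ B (F c)` is continuous and antitone on `[c^θ, T)` and drops below the
diagonal near `T`; such a map has a fixed point beyond `c^θ`, necessarily unique, exactly when
`c^θ < B (F c^θ)`. Clearing the denominators turns this into the stated bound on `λ`.
-/

open Set Filter Topology

theorem existsUnique_fixedPoint_iff_of_antitoneOn {S : Set ℝ} (hS : S.OrdConnected) {a b : ℝ}
    (ha : a ∈ S) (hb : b ∈ S) (hab : a ≤ b) {φ : ℝ → ℝ} (hφ : AntitoneOn φ (Ici a ∩ S))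
    (hφc : ContinuousOn φ (Ici a ∩ S)) (hφb : φ b < b) :
    (∃! c, (a < c ∧ c ∈ S) ∧ c = φ c) ↔ a < φ a := by
  constructor
  · rintro ⟨c, ⟨⟨hac, hcS⟩, hc⟩, -⟩
    calc a < c := hac
      _ = φ c := hc
      _ ≤ φ a := hφ ⟨self_mem_Ici, ha⟩ ⟨hac.le, hcS⟩ hac.le
  · intro haφ
    have hIcc : Icc a b ⊆ Ici a ∩ S := fun x hx => ⟨hx.1, hS.out ha hb hx⟩
    have hdisp : StrictMonoOn (fun x => x - φ x) (Ici a ∩ S) := fun x hx y hy hxy => by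
      linarith [hφ hx hy hxy.le]
    have hcont : ContinuousOn (fun x => x - φ x) (Icc a b) :=
      (continuousOn_id' _).sub (hφc.mono hIcc)
    obtain ⟨c, hc, hc0⟩ : ∃ c ∈ Icc a b, c - φ c = 0 :=
      intermediate_value_Icc hab hcont ⟨by linarith, by linarith⟩
    have hac : a < c := lt_of_le_of_ne hc.1 (by rintro rfl; linarith)
    refine ⟨c, ⟨⟨hac, (hIcc hc).2⟩, by linarith⟩, fun d ⟨⟨had, hdS⟩, hd⟩ => ?_⟩
    exact hdisp.injOn ⟨had.le, hdS⟩ (hIcc hc) (by linarith)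

noncomputable def breakEvenCost (H M R lam p : ℝ) : ℝ :=
  lam * R / (p * H + M) - (1 - lam) * R / ((1 - p) * H)

section BreakEvenCost

variable {H M R lam : ℝ}

theorem breakEvenCost_strictAntiOn (hH : 0 < H) (hM : 0 < M) (hR : 0 < R)
    (hlam : 0 < lam ∧ lam < 1) : StrictAntiOn (breakEvenCost H M R lam) (Ico 0 1) := by
  intro p hp q hq hpq
  have reward : lam * R / (q * H + M) < lam * R / (p * H + M) :=
    div_lt_div_of_pos_left (by nlinarith) (by nlinarith [hp.1]) (by nlinarith)
  have penalty : (1 - lam) * R / ((1 - p) * H) < (1 - lam) * R / ((1 - q) * H) :=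
    div_lt_div_of_pos_left (by nlinarith) (by nlinarith [hq.2]) (by nlinarith)
  unfold breakEvenCost
  linarith

theorem continuousOn_breakEvenCost (hH : 0 < H) (hM : 0 < M) :
    ContinuousOn (breakEvenCost H M R lam) (Ico 0 1) := by
  refine ContinuousOn.sub ?_ ?_ <;> refine continuousOn_const.div (by fun_prop) fun p hp => ?_
  · nlinarith [hp.1]
  · nlinarith [hp.2]

theorem tendsto_breakEvenCost_atBot (hH : 0 < H) (hM : 0 < M) (hR : 0 < R) (hlam : lam < 1) :
    Tendsto (breakEvenCost H M R lam) (𝓝[<] 1) atBot := by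
  have hreward :
      Tendsto (fun p => lam * R / (p * H + M)) (𝓝[<] 1) (𝓝 (lam * R / (1 * H + M))) :=
    (continuousAt_const.div (by fun_prop) (by positivity)).tendsto.mono_left nhdsWithin_le_nhds
  have hgap : Tendsto (fun p : ℝ => 1 - p) (𝓝[<] 1) (𝓝[>] 0) :=
    tendsto_nhdsWithin_iff.2
      ⟨by simpa using ((continuous_sub_left (1 : ℝ)).tendsto 1).mono_left nhdsWithin_le_nhds,
        eventually_nhdsWithin_of_forall fun _ hp => mem_Ioi.2 (sub_pos.2 hp)⟩
  have hpenalty : Tendsto (fun p => (1 - lam) * R / ((1 - p) * H)) (𝓝[<] 1) atTop := by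
    have hcoef : 0 < (1 - lam) * R / H := by positivity
    refine ((tendsto_inv_nhdsGT_zero.comp hgap).const_mul_atTop hcoef).congr fun p => ?_
    simp only [Function.comp_apply]
    field_simp
  exact (hreward.add_atBot (tendsto_neg_atTop_atBot.comp hpenalty)).congr fun _ =>
    (sub_eq_add_neg _ _).symm

theorem lt_breakEvenCost_iff (hH : 0 < H) (hM : 0 < M) (hR : 0 < R) {p : ℝ} (hp : p ∈ Ico 0 1)
    (c : ℝ) : c < breakEvenCost H M R lam p ↔
      (c / R * (p * H + M) * (1 - p) * H + p * H + M) / (H + M) < lam := by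
  have hA : 0 < p * H + M := by nlinarith [hp.1]
  have hB : 0 < (1 - p) * H := by nlinarith [hp.2]
  have hB' : 1 - p ≠ 0 := by linarith [hp.2]
  have key : breakEvenCost H M R lam p - c
      = (lam * (H + M) - (c / R * (p * H + M) * (1 - p) * H + p * H + M)) * R
        / ((p * H + M) * ((1 - p) * H)) := by
    unfold breakEvenCost
    field_simp
    ring
  rw [div_lt_iff₀ (by positivity), ← sub_pos, ← sub_pos (a := lam * (H + M)), key,
    div_pos_iff_of_pos_right (by positivity), mul_pos_iff_of_pos_right hR]

end BreakEvenCost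

theorem endogenous_rewards_equilibrium_general
    (H M R lam cθ : ℝ) (T : EReal) (F : ℝ → ℝ)
    (hH : 0 < H) (hM : 0 < M) (hR : 0 < R)
    (hF0 : F 0 = 0)
    (hFmono : ∀ c₁ c₂ : ℝ, 0 ≤ c₁ → c₁ < c₂ → (c₂ : EReal) < T → F c₁ < F c₂)
    (hFcont : ContinuousOn F {c : ℝ | 0 ≤ c ∧ (c : EReal) < T})
    (hFlt1 : ∀ c : ℝ, 0 ≤ c → (c : EReal) < T → F c < 1)
    (hFlim : ∀ y : ℝ, y < 1 → ∃ c : ℝ, 0 ≤ c ∧ (c : EReal) < T ∧ y < F c)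
    (hcθ : 0 ≤ cθ ∧ (cθ : EReal) < T)
    (hlam : 0 < lam ∧ lam < 1) :
    (∃! c : ℝ, (cθ < c ∧ (c : EReal) < T) ∧
        c = lam * R / (F c * H + M) - (1 - lam) * R / ((1 - F c) * H))
      ↔ (cθ / R * (F cθ * H + M) * (1 - F cθ) * H + F cθ * H + M) / (H + M)
          < lam := by
  obtain ⟨hcθ0, hcθT⟩ := hcθ
  set D := {c : ℝ | 0 ≤ c ∧ (c : EReal) < T}
  have hFstrict : StrictMonoOn F D := fun x hx y hy hxy => hFmono x y hx.1 hxy hy.2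
  have hmaps : MapsTo F D (Ico 0 1) := fun c hc =>
    ⟨hF0 ▸ hFstrict.monotoneOn ⟨le_rfl, (EReal.coe_le_coe_iff.2 hc.1).trans_lt hc.2⟩ hc hc.1,
      hFlt1 c hc.1 hc.2⟩
  have hφ : StrictAntiOn (fun c => breakEvenCost H M R lam (F c)) D :=
    (breakEvenCost_strictAntiOn hH hM hR hlam).comp_strictMonoOn hFstrict hmaps
  have hφc : ContinuousOn (fun c => breakEvenCost H M R lam (F c)) D :=
    (continuousOn_breakEvenCost hH hM).comp hFcont hmaps
  obtain ⟨l, hl1, hl⟩ := mem_nhdsLT_iff_exists_Ioo_subset.1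
    ((tendsto_breakEvenCost_atBot hH hM hR hlam.2).eventually (eventually_lt_atBot cθ))
  obtain ⟨b, hb0, hbT, hFb⟩ := hFlim (max l (F cθ)) (max_lt hl1 (hFlt1 cθ hcθ0 hcθT))
  have hθb : cθ < b :=
    (hFstrict.lt_iff_lt ⟨hcθ0, hcθT⟩ ⟨hb0, hbT⟩).1 ((le_max_right _ _).trans_lt hFb)
  have hφb : breakEvenCost H M R lam (F b) < b :=
    (hl ⟨(le_max_left _ _).trans_lt hFb, (hmaps ⟨hb0, hbT⟩).2⟩).trans hθb
  have hsub : Ici cθ ∩ {c : ℝ | (c : EReal) < T} ⊆ D := fun c hc => ⟨hcθ0.trans hc.1, hc.2⟩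
  rw [← lt_breakEvenCost_iff hH hM hR (hmaps ⟨hcθ0, hcθT⟩)]
  exact existsUnique_fixedPoint_iff_of_antitoneOn
    (ordConnected_Iio.preimage_mono EReal.coe_strictMono.monotone) hcθT hbT hθb.le
    (hφ.antitoneOn.mono hsub) (hφc.mono hsub) hφb

/-- Endogenous rewards: fix a security threshold cost `c^θ ∈ [0,T)`
and let `λ ∈ (0,1)`. There exists a unique `c* ∈ (c^θ, T)` satisfying
`c* = λ·R/(F(c*)·H + M) − (1−λ)·R/((1−F(c*))·H)` if and only if
`λ > ((c^θ/R)·(F(c^θ)·H + M)·(1−F(c^θ))·H + F(c^θ)·H + M) / (H + M)`. -/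
theorem endogenous_rewards_equilibrium
    (H M R lam cθ : ℝ) (T : EReal) (F : ℝ → ℝ)
    (hH : 0 < H) (hM : 0 < M) (hMH : M < H) (hR : 0 < R)
    (hT : 0 < T)
    (hF0 : F 0 = 0)
    (hFmono : ∀ c₁ c₂ : ℝ, 0 ≤ c₁ → c₁ < c₂ → (c₂ : EReal) < T → F c₁ < F c₂)
    (hFcont : ContinuousOn F {c : ℝ | 0 ≤ c ∧ (c : EReal) < T})
    (hFlt1 : ∀ c : ℝ, 0 ≤ c → (c : EReal) < T → F c < 1)
    (hFlim : ∀ y : ℝ, y < 1 → ∃ c : ℝ, 0 ≤ c ∧ (c : EReal) < T ∧ y < F c)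
    (hcθ : 0 ≤ cθ ∧ (cθ : EReal) < T)
    (hlam : 0 < lam ∧ lam < 1) :
    (∃! c : ℝ, (cθ < c ∧ (c : EReal) < T) ∧
        c = lam * R / (F c * H + M) - (1 - lam) * R / ((1 - F c) * H))
      ↔ (cθ / R * (F cθ * H + M) * (1 - F cθ) * H + F cθ * H + M) / (H + M)
          < lam :=
  endogenous_rewards_equilibrium_general H M R lam cθ T F hH hM hR hF0 hFmono hFcont hFlt1 hFlim hcθ
    hlam
end
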